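/- arXiv:2501.12406 — 3 statements merged into one kernel-verified Lean document; each statement's English description precedes it below -/
import Mathlib

section
/- For every natural number n ≥ 2 and every matrix X ∈ Mat_{2n}(ℂ), the following are equivalent: (i) X ∈ 𝔰𝔬(B), X² = 0 and rank X ≤ 2; (ii) there exist u,v ∈ ℂ^{2n} with B(u,u) = B(u,v) = B(v,v) = 0 such that X = Φ(u∧v). (This identifies the closure of the minimal nilpotent orbit of 𝔰𝔬_{2n} in matrix terms with the image under Φ of the decomposable isotropic 2-vectors.) -/
noncomputable section
open Matrix ExteriorAlgebra

/-- The bilinear form B(x,y) = Σ_{k=1}^{m} x_k y_{m+1-k} (0-indexed via `Fin.rev`). -/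
def bilinB (m : ℕ) (x y : Fin m → ℂ) : ℂ := ∑ k, x k * y k.rev

/-- SO(B): elements of SL_m(ℂ) preserving B. -/
def SOB (m : ℕ) : Set (Matrix.SpecialLinearGroup (Fin m) ℂ) :=
  {g | ∀ x y, bilinB m (g.1.mulVec x) (g.1.mulVec y) = bilinB m x y}

/-- The 2-vector u ∧ v as an element of ⋀²ℂ^m. -/
def wedge (m : ℕ) (u v : Fin m → ℂ) : ⋀[ℂ]^2 (Fin m → ℂ) :=
  ⟨ι ℂ u * ι ℂ v, by
    show _ ∈ LinearMap.range (ι ℂ : (Fin m → ℂ) →ₗ[ℂ] _) ^ 2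
    rw [pow_two]
    exact Submodule.mul_mem_mul (LinearMap.mem_range_self _ u) (LinearMap.mem_range_self _ v)⟩

lemma map_mem_pow2 {m : ℕ} (f : (Fin m → ℂ) →ₗ[ℂ] (Fin m → ℂ)) :
    ∀ x ∈ ⋀[ℂ]^2 (Fin m → ℂ),
      (ExteriorAlgebra.map f) x ∈ ⋀[ℂ]^2 (Fin m → ℂ) := by
  intro x hx
  have h2 : Submodule.map (ExteriorAlgebra.map f).toLinearMap
      (LinearMap.range (ι ℂ (M := Fin m → ℂ))) ≤ LinearMap.range (ι ℂ (M := Fin m → ℂ)) := by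
    rw [← LinearMap.range_comp, map_comp_ι, LinearMap.range_comp]
    exact LinearMap.map_le_range
  have h1 : Submodule.map (ExteriorAlgebra.map f).toLinearMap (⋀[ℂ]^2 (Fin m → ℂ))
      ≤ ⋀[ℂ]^2 (Fin m → ℂ) := by
    show Submodule.map _ (LinearMap.range (ι ℂ (M := Fin m → ℂ)) ^ 2)
      ≤ LinearMap.range (ι ℂ (M := Fin m → ℂ)) ^ 2
    rw [Submodule.map_pow, pow_two, pow_two]
    exact mul_le_mul' h2 h2
  exact h1 ⟨x, hx, rfl⟩

/-- The induced map ⋀²g on the second exterior power. -/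
def mapPow2 {m : ℕ} (f : (Fin m → ℂ) →ₗ[ℂ] (Fin m → ℂ)) :
    ⋀[ℂ]^2 (Fin m → ℂ) →ₗ[ℂ] ⋀[ℂ]^2 (Fin m → ℂ) :=
  (ExteriorAlgebra.map f).toLinearMap.restrict (map_mem_pow2 f)

/-- The Lie algebra 𝔰𝔬(B) = {X : B(Xx,y) + B(x,Xy) = 0 for all x,y}. -/
def soB (m : ℕ) : Set (Matrix (Fin m) (Fin m) ℂ) :=
  {X | ∀ x y, bilinB m (X.mulVec x) y + bilinB m x (X.mulVec y) = 0}

/-- The defining property of Φ : ⋀²ℂ^m → Mat_m(ℂ), namely Φ(u∧v)(x) = B(v,x)u − B(u,x)v. -/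
def IsPhi (m : ℕ) (Φ : ⋀[ℂ]^2 (Fin m → ℂ) →ₗ[ℂ] Matrix (Fin m) (Fin m) ℂ) : Prop :=
  ∀ u v x : Fin m → ℂ,
    (Φ (wedge m u v)).mulVec x = bilinB m v x • u - bilinB m u x • v

/-!
Let `f` be `B`-skew with `f ∘ f = 0`. Its range is totally isotropic, as
`B (f a) (f b) = -B a (f (f b)) = 0`, and `B (f x) x = 0` for all `x`. If `f ≠ 0`, nondegeneracy
gives `x, y` with `B (f x) y = 1`, hence `B (f y) x = -1`; pairing against `x` and `y` shows that
`f y, f x` are independent, so when `rank f ≤ 2` they span the range. Pairing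
`f z = a • f y + b • f x` against `x` and `y` again gives `a = B (f x) z`, `b = -B (f y) z`, that is
`f z = B (f x) z • f y - B (f y) z • f x`, which is `Φ (f y ∧ f x)`.
-/

open Module LinearMap

namespace AlternatingMap

variable {R M N : Type*} [CommSemiring R] [AddCommMonoid M] [Module R M] [AddCommMonoid N]
  [Module R N]

def ofBilinFinTwo (f : M →ₗ[R] M →ₗ[R] N) (hf : ∀ x, f x x = 0) : M [⋀^Fin 2]→ₗ[R] N where
  toMultilinearMap :=
    LinearMap.uncurryLeft ((MultilinearMap.ofSubsingletonₗ R R M N (0 : Fin 1)).toLinearMap ∘ₗ f)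
  map_eq_zero_of_eq' v i j hv hij := by
    fin_cases i <;> fin_cases j <;> simp_all [LinearMap.uncurryLeft_apply, Fin.tail]

@[simp]
lemma ofBilinFinTwo_apply (f : M →ₗ[R] M →ₗ[R] N) (hf : ∀ x, f x x = 0) (v : Fin 2 → M) :
    ofBilinFinTwo f hf v = f (v 0) (v 1) := by
  simp [ofBilinFinTwo, Fin.tail]

end AlternatingMap

lemma Submodule.eq_span_pair_of_finrank_le_two {K V : Type*} [Field K] [AddCommGroup V]
    [Module K V] {W : Submodule K V} [FiniteDimensional K W] (hW : finrank K W ≤ 2) {u v : V}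
    (hu : u ∈ W) (hv : v ∈ W) (huv : LinearIndependent K ![u, v]) : W = span K {u, v} := by
  symm
  refine Submodule.eq_of_le_of_finrank_le (span_le.2 (Set.pair_subset hu hv)) ?_
  have h2 := finrank_span_eq_card huv
  rw [Matrix.range_cons_cons_empty, Fintype.card_fin] at h2
  omega

namespace LinearMap.BilinForm

section CommRing

variable {R M : Type*} [CommRing R] [AddCommGroup M] [Module R M] (B : LinearMap.BilinForm R M)

def wedgeEnd : M →ₗ[R] M →ₗ[R] M →ₗ[R] M :=
  LinearMap.mk₂ R (fun u v ↦ (B v).smulRight u - (B u).smulRight v)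
    (fun u u' v ↦ by ext; simp; module)
    (fun a u v ↦ by ext; simp; module)
    (fun u v v' ↦ by ext; simp; module)
    (fun a u v ↦ by ext; simp; module)

@[simp]
lemma wedgeEnd_apply (u v x : M) : B.wedgeEnd u v x = B v x • u - B u x • v := rfl

lemma wedgeEnd_self (u : M) : B.wedgeEnd u u = 0 := by
  ext; simp

variable {B}

lemma isSkewAdjoint_wedgeEnd (hB : B.IsSymm) (u v : M) : B.IsSkewAdjoint (B.wedgeEnd u v) := by
  intro x y
  simp [hB.eq x u, hB.eq x v]
  ring

lemma wedgeEnd_comp_self (hB : B.IsSymm) {u v : M} (huu : B u u = 0) (huv : B u v = 0)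
    (hvv : B v v = 0) : B.wedgeEnd u v ∘ₗ B.wedgeEnd u v = 0 := by
  ext x
  have hvu : B v u = 0 := hB.eq v u ▸ huv
  simp [huu, huv, hvv, hvu]

lemma range_wedgeEnd_le_span (u v : M) : range (B.wedgeEnd u v) ≤ Submodule.span R {u, v} := by
  rintro _ ⟨x, rfl⟩
  rw [wedgeEnd_apply]
  exact sub_mem (Submodule.smul_mem _ _ (Submodule.subset_span (by simp)))
    (Submodule.smul_mem _ _ (Submodule.subset_span (by simp)))

end CommRing

variable {K V : Type*} [Field K] [AddCommGroup V] [Module K V] {B : LinearMap.BilinForm K V}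

lemma finrank_range_wedgeEnd_le (u v : V) : finrank K (range (B.wedgeEnd u v)) ≤ 2 := by
  have : Module.Finite K (Submodule.span K {u, v}) := Module.Finite.span_of_finite K (by simp)
  have h := finrank_range_le_card (R := K) ![u, v]
  rw [Matrix.range_cons_cons_empty, Fintype.card_fin] at h
  exact (Submodule.finrank_mono (range_wedgeEnd_le_span u v)).trans h

end LinearMap.BilinForm

namespace LinearMap.IsSkewAdjoint

variable {K V : Type*} [Field K] [AddCommGroup V] [Module K V] {B : LinearMap.BilinForm K V}
  {f : V →ₗ[K] V}

lemma apply_left (hf : B.IsSkewAdjoint f) (x y : V) : B (f x) y = -B x (f y) := by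
  simpa using hf x y

lemma apply_self [NeZero (2 : K)] (hB : B.IsSymm) (hf : B.IsSkewAdjoint f)
    (x : V) : B (f x) x = 0 := by
  have h : (2 : K) * B (f x) x = 0 := by
    linear_combination hf.apply_left x x - hB.eq x (f x)
  exact (mul_eq_zero.1 h).resolve_left two_ne_zero

lemma apply_apply_eq_zero (hf : B.IsSkewAdjoint f) (hff : f ∘ₗ f = 0)
    (x y : V) : B (f x) (f y) = 0 := by
  rw [hf.apply_left, ← LinearMap.comp_apply f f, hff, LinearMap.zero_apply, map_zero, neg_zero]

theorem exists_eq_wedgeEnd [NeZero (2 : K)] [FiniteDimensional K V]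
    (hB : B.IsSymm) (hB' : B.SeparatingLeft) (hf : B.IsSkewAdjoint f) (hff : f ∘ₗ f = 0)
    (hrank : finrank K (range f) ≤ 2) :
    ∃ u v, B u u = 0 ∧ B u v = 0 ∧ B v v = 0 ∧ f = B.wedgeEnd u v := by
  obtain rfl | ⟨x₀, hx₀⟩ : f = 0 ∨ ∃ x, f x ≠ 0 := by
    by_contra! h
    exact h.1 (LinearMap.ext h.2)
  · exact ⟨0, 0, by simp, by simp, by simp, by ext; simp⟩
  obtain ⟨y, hy⟩ : ∃ y, B (f x₀) y ≠ 0 := by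
    by_contra! h
    exact hx₀ (hB' _ h)
  set x := (B (f x₀) y)⁻¹ • x₀
  have hxy : B (f x) y = 1 := by simp [x, hy]
  have hyx : B (f y) x = -1 := by rw [hf.apply_left, ← hB.eq, hxy]
  have hxx := hf.apply_self hB x
  have hyy := hf.apply_self hB y
  have hindep : LinearIndependent K ![f y, f x] := by
    refine LinearIndependent.pair_iff.2 fun s t hst ↦ ⟨?_, ?_⟩
    · simpa [hyx, hxx] using congrArg (B · x) hst
    · simpa [hxy, hyy] using congrArg (B · y) hst
  have hspan := Submodule.eq_span_pair_of_finrank_le_two hrank (mem_range_self f y)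
    (mem_range_self f x) hindep
  refine ⟨f y, f x, hf.apply_apply_eq_zero hff y y, hf.apply_apply_eq_zero hff y x,
    hf.apply_apply_eq_zero hff x x, LinearMap.ext fun z ↦ ?_⟩
  obtain ⟨a, b, hab⟩ := Submodule.mem_span_pair.1 (hspan ▸ mem_range_self f z)
  have ha : a = B (f x) z := by
    have := congrArg (B · x) hab
    simp only [map_add, map_smul, LinearMap.add_apply, LinearMap.smul_apply, smul_eq_mul,
      hyx, hxx] at this
    linear_combination -this - hf.apply_left z x + hB.eq z (f x)
  have hb : b = -B (f y) z := by
    have := congrArg (B · y) hab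
    simp only [map_add, map_smul, LinearMap.add_apply, LinearMap.smul_apply, smul_eq_mul,
      hxy, hyy] at this
    linear_combination this + hf.apply_left z y - hB.eq z (f y)
  rw [BilinForm.wedgeEnd_apply, ← hab, ha, hb, neg_smul, sub_eq_add_neg]

end LinearMap.IsSkewAdjoint

namespace LinearMap.BilinForm

variable {K V : Type*} [Field K] [AddCommGroup V] [Module K V] {B : LinearMap.BilinForm K V}

theorem isSkewAdjoint_comp_self_finrank_le_two_iff [NeZero (2 : K)] [FiniteDimensional K V]
    (hB : B.IsSymm) (hB' : B.SeparatingLeft) (f : V →ₗ[K] V) :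
    (B.IsSkewAdjoint f ∧ f ∘ₗ f = 0 ∧ finrank K (range f) ≤ 2) ↔
      ∃ u v, B u u = 0 ∧ B u v = 0 ∧ B v v = 0 ∧ f = B.wedgeEnd u v := by
  refine ⟨fun ⟨hf, hff, hrank⟩ ↦ hf.exists_eq_wedgeEnd hB hB' hff hrank, ?_⟩
  rintro ⟨u, v, huu, huv, hvv, rfl⟩
  exact ⟨isSkewAdjoint_wedgeEnd hB u v, wedgeEnd_comp_self hB huu huv hvv,
    finrank_range_wedgeEnd_le u v⟩

end LinearMap.BilinForm

section Matrix

variable {m : ℕ}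

variable (m) in
def bilinBForm : LinearMap.BilinForm ℂ (Fin m → ℂ) :=
  LinearMap.mk₂ ℂ (bilinB m)
    (fun x x' y ↦ by simp [bilinB, add_mul, Finset.sum_add_distrib])
    (fun a x y ↦ by simp [bilinB, Finset.mul_sum, mul_assoc])
    (fun x y y' ↦ by simp [bilinB, mul_add, Finset.sum_add_distrib])
    (fun a x y ↦ by simp [bilinB, Finset.mul_sum, mul_left_comm])

@[simp]
lemma bilinBForm_apply (x y : Fin m → ℂ) : bilinBForm m x y = bilinB m x y := rfl

lemma bilinBForm_isSymm : (bilinBForm m).IsSymm :=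
  ⟨fun x y ↦ Fintype.sum_equiv Fin.revPerm _ _ fun k ↦ by simp [mul_comm]⟩

lemma bilinBForm_separatingLeft : (bilinBForm m).SeparatingLeft := fun x hx ↦ by
  funext k
  simpa [bilinB, Pi.single_apply, Fin.rev_eq_iff] using hx (Pi.single k.rev 1)

lemma mem_soB_iff (X : Matrix (Fin m) (Fin m) ℂ) :
    X ∈ soB m ↔ (bilinBForm m).IsSkewAdjoint (Matrix.toLin' X) := by
  simp only [soB, Set.mem_ofPred_eq, LinearMap.IsSkewAdjoint, LinearMap.IsAdjointPair,
    Matrix.toLin'_apply, Pi.neg_apply, ← bilinBForm_apply, map_neg, add_eq_zero_iff_eq_neg]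

lemma wedge_eq_ιMulti (u v : Fin m → ℂ) : wedge m u v = exteriorPower.ιMulti ℂ 2 ![u, v] :=
  Subtype.ext (by simp [wedge, ExteriorAlgebra.ιMulti_apply])

variable (m) in
lemma exists_isPhi : ∃ Φ, IsPhi m Φ :=
  ⟨exteriorPower.alternatingMapLinearEquiv <| LinearMap.toMatrix'.toLinearMap.compAlternatingMap <|
      .ofBilinFinTwo (bilinBForm m).wedgeEnd (bilinBForm m).wedgeEnd_self,
    fun u v x ↦ by simp [wedge_eq_ιMulti, exteriorPower.alternatingMapLinearEquiv_apply_ιMulti]⟩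

lemma IsPhi.toLin'_wedge {Φ} (hΦ : IsPhi m Φ) (u v : Fin m → ℂ) :
    Matrix.toLin' (Φ (wedge m u v)) = (bilinBForm m).wedgeEnd u v :=
  LinearMap.ext (hΦ u v)

end Matrix

theorem stmt4_general (n : ℕ) :
    (∃ Φ : ⋀[ℂ]^2 (Fin (2*n) → ℂ) →ₗ[ℂ] Matrix (Fin (2*n)) (Fin (2*n)) ℂ,
      IsPhi (2*n) Φ) ∧
    ∀ Φ : ⋀[ℂ]^2 (Fin (2*n) → ℂ) →ₗ[ℂ] Matrix (Fin (2*n)) (Fin (2*n)) ℂ,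
      IsPhi (2*n) Φ →
        ∀ X : Matrix (Fin (2*n)) (Fin (2*n)) ℂ,
          (X ∈ soB (2*n) ∧ X * X = 0 ∧ X.rank ≤ 2) ↔
          (∃ u v : Fin (2*n) → ℂ,
            bilinB (2*n) u u = 0 ∧ bilinB (2*n) u v = 0 ∧ bilinB (2*n) v v = 0 ∧
            X = Φ (wedge (2*n) u v)) := by
  refine ⟨exists_isPhi _, fun Φ hΦ X ↦ ?_⟩
  rw [mem_soB_iff, ← Matrix.toLin'.injective.eq_iff, Matrix.toLin'_mul, map_zero, Matrix.rank,
    ← Matrix.toLin'_apply', LinearMap.BilinForm.isSkewAdjoint_comp_self_finrank_le_two_iff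
      bilinBForm_isSymm bilinBForm_separatingLeft]
  simp_rw [← Matrix.toLin'.injective.eq_iff, hΦ.toLin'_wedge, bilinBForm_apply]

/-- X ∈ 𝔰𝔬(B), X² = 0 and rank X ≤ 2 iff X = Φ(u∧v) for isotropic u, v. -/
theorem stmt4 (n : ℕ) (hn : 2 ≤ n) :
    (∃ Φ : ⋀[ℂ]^2 (Fin (2*n) → ℂ) →ₗ[ℂ] Matrix (Fin (2*n)) (Fin (2*n)) ℂ,
      IsPhi (2*n) Φ) ∧
    ∀ Φ : ⋀[ℂ]^2 (Fin (2*n) → ℂ) →ₗ[ℂ] Matrix (Fin (2*n)) (Fin (2*n)) ℂ,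
      IsPhi (2*n) Φ →
        ∀ X : Matrix (Fin (2*n)) (Fin (2*n)) ℂ,
          (X ∈ soB (2*n) ∧ X * X = 0 ∧ X.rank ≤ 2) ↔
          (∃ u v : Fin (2*n) → ℂ,
            bilinB (2*n) u u = 0 ∧ bilinB (2*n) u v = 0 ∧ bilinB (2*n) v v = 0 ∧
            X = Φ (wedge (2*n) u v)) :=
  stmt4_general n
end
end

section
/- For every natural number n ≥ 4, the matrix X₀ = Φ(e₁∧e₂) is a highest root vector of 𝔰𝔬(B) in the following precise sense: for every Y ∈ 𝔰𝔬(B) there is a scalar c ∈ ℂ with [X₀,[X₀,Y]] = c·X₀, and moreover there exists Y ∈ 𝔰𝔬(B) with [X₀,[X₀,Y]] = X₀; that is, the set {[X₀,[X₀,Y]] : Y ∈ 𝔰𝔬(B)} equals the line ℂ·X₀. -/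
noncomputable section
open Matrix ExteriorAlgebra

/-! Write k̄ for `Fin.rev k`. Evaluating the defining identity of Φ on basis vectors gives
Φ(e_i ∧ e_j) = E_{i j̄} − E_{j ī}. For i = 1, j = 2 the indices i, j, ī, j̄ are distinct, so
X₀² = 0 and [X₀, [X₀, Y]] = −2 X₀ Y X₀; the relations Y_{ab} = −Y_{b̄ ā} defining 𝔰𝔬(B) reduce
X₀ Y X₀ to Y_{j̄ i} X₀. Every multiple of X₀ occurs since Φ(e_{j̄} ∧ e_{ī}) ∈ 𝔰𝔬(B) has entry 1 at
(j̄, i). -/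

section BilinB

variable {m : ℕ}

lemma bilinB_eq_sum_rev (x y : Fin m → ℂ) : bilinB m x y = ∑ k, x k.rev * y k := by
  rw [bilinB, ← Equiv.sum_comp Fin.revPerm]
  simp

lemma bilinB_comm (x y : Fin m → ℂ) : bilinB m x y = bilinB m y x := by
  rw [bilinB_eq_sum_rev, bilinB]
  exact Finset.sum_congr rfl fun _ _ => mul_comm _ _

lemma bilinB_sub_left (x y z : Fin m → ℂ) :
    bilinB m (x - y) z = bilinB m x z - bilinB m y z := by
  simp only [bilinB, Pi.sub_apply, sub_mul, Finset.sum_sub_distrib]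

lemma bilinB_smul_left (c : ℂ) (x y : Fin m → ℂ) :
    bilinB m (c • x) y = c * bilinB m x y := by
  simp only [bilinB, Pi.smul_apply, smul_eq_mul, mul_assoc, Finset.mul_sum]

lemma bilinB_smul_right (c : ℂ) (x y : Fin m → ℂ) :
    bilinB m x (c • y) = c * bilinB m x y := by
  rw [bilinB_comm, bilinB_smul_left, bilinB_comm]

lemma bilinB_single_left (i : Fin m) (y : Fin m → ℂ) :
    bilinB m (Pi.single i 1) y = y i.rev := by
  simp [bilinB, Pi.single_apply]

lemma bilinB_single_right (x : Fin m → ℂ) (j : Fin m) :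
    bilinB m x (Pi.single j 1) = x j.rev := by
  rw [bilinB_comm, bilinB_single_left]

end BilinB

section SoB

variable {m : ℕ}

lemma smul_mem_soB (c : ℂ) {Y : Matrix (Fin m) (Fin m) ℂ} (hY : Y ∈ soB m) : c • Y ∈ soB m := by
  intro x y
  rw [smul_mulVec, smul_mulVec, bilinB_smul_left, bilinB_smul_right, ← mul_add, hY x y, mul_zero]

lemma apply_add_apply_rev_of_mem_soB {Y : Matrix (Fin m) (Fin m) ℂ} (hY : Y ∈ soB m)
    (a b : Fin m) : Y a b + Y b.rev a.rev = 0 := by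
  simpa [bilinB_single_left, bilinB_single_right] using hY (Pi.single b 1) (Pi.single a.rev 1)

end SoB

lemma lie_lie_eq_of_mul_self_eq_zero {R : Type*} [Ring R] {X : R} (hX : X * X = 0) (Y : R) :
    ⁅X, ⁅X, Y⁆⁆ = (-2 : ℤ) • (X * Y * X) := by
  have : ⁅X, ⁅X, Y⁆⁆ = X * X * Y + (-2 : ℤ) • (X * Y * X) + Y * (X * X) := by
    simp only [Ring.lie_def]
    noncomm_ring
  rw [this, hX, zero_mul, mul_zero, zero_add, add_zero]

section Phi

variable {m : ℕ}

def phiAlt (m : ℕ) : (Fin m → ℂ) [⋀^Fin 2]→ₗ[ℂ] Matrix (Fin m) (Fin m) ℂ :=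
  (Matrix.ofLinearEquiv ℂ).toLinearMap.compAlternatingMap <|
    AlternatingMap.pi fun a => AlternatingMap.pi fun b =>
      Matrix.detRowAlternating.compLinearMap (LinearMap.pi fun k => LinearMap.proj (![a, b.rev] k))

lemma phiAlt_apply (u v : Fin m → ℂ) (a b : Fin m) :
    phiAlt m ![u, v] a b = u a * v b.rev - u b.rev * v a := by
  simp only [phiAlt, LinearMap.compAlternatingMap_apply, LinearEquiv.coe_coe,
    Matrix.coe_ofLinearEquiv, AlternatingMap.pi_apply, Matrix.of_apply,
    AlternatingMap.compLinearMap_apply]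
  exact (Matrix.det_fin_two _).trans (by simp)

def phi (m : ℕ) : ⋀[ℂ]^2 (Fin m → ℂ) →ₗ[ℂ] Matrix (Fin m) (Fin m) ℂ :=
  liftAlternating (fun k => if h : k = 2 then h ▸ phiAlt m else 0) ∘ₗ Submodule.subtype _

lemma coe_wedge (u v : Fin m → ℂ) :
    (wedge m u v : ExteriorAlgebra ℂ (Fin m → ℂ)) = ιMulti ℂ 2 ![u, v] := by
  simp [wedge, ιMulti_succ_apply, Matrix.vecTail]

lemma phi_wedge (u v : Fin m → ℂ) : phi m (wedge m u v) = phiAlt m ![u, v] := by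
  rw [phi, LinearMap.comp_apply, Submodule.coe_subtype, coe_wedge, liftAlternating_apply_ιMulti]
  rfl

lemma isPhi_phi (m : ℕ) : IsPhi m (phi m) := by
  intro u v x
  ext a
  simp only [phi_wedge, mulVec, dotProduct, phiAlt_apply, Pi.sub_apply, Pi.smul_apply,
    smul_eq_mul, bilinB_eq_sum_rev, Finset.sum_mul, ← Finset.sum_sub_distrib]
  exact Finset.sum_congr rfl fun _ _ => by ring

end Phi

section SoUnit

variable {m : ℕ}

def soUnit (i j : Fin m) : Matrix (Fin m) (Fin m) ℂ := single i j.rev 1 - single j i.rev 1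

lemma soUnit_mul_self {i j : Fin m} (hi : i.rev ≠ i) (hj : j.rev ≠ j) (hij : i.rev ≠ j) :
    soUnit i j * soUnit i j = 0 := by
  have hji : j.rev ≠ i := fun h => hij (Fin.rev_eq_iff.mp h).symm
  simp [soUnit, sub_mul, mul_sub, hi, hj, hij, hji]

lemma soUnit_mul_mul_soUnit {Y : Matrix (Fin m) (Fin m) ℂ} (hY : Y ∈ soB m) (i j : Fin m) :
    soUnit i j * Y * soUnit i j = Y j.rev i • soUnit i j := by
  have hjj : Y j.rev j = 0 := by
    simpa using apply_add_apply_rev_of_mem_soB hY j.rev j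
  have hii : Y i.rev i = 0 := by
    simpa using apply_add_apply_rev_of_mem_soB hY i.rev i
  have hij : Y i.rev j = -Y j.rev i := by
    simpa using eq_neg_of_add_eq_zero_left (apply_add_apply_rev_of_mem_soB hY i.rev j)
  simp only [soUnit, sub_mul, mul_sub, single_mul_mul_single, hjj, hii, hij, smul_sub,
    smul_single]
  simp [sub_eq_add_neg, single_neg]

end SoUnit

namespace IsPhi

variable {m : ℕ} {Φ : ⋀[ℂ]^2 (Fin m → ℂ) →ₗ[ℂ] Matrix (Fin m) (Fin m) ℂ}

lemma apply_wedge_mem_soB (hΦ : IsPhi m Φ) (u v : Fin m → ℂ) : Φ (wedge m u v) ∈ soB m := by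
  intro x y
  rw [hΦ, hΦ, bilinB_comm x, bilinB_sub_left, bilinB_sub_left, bilinB_smul_left,
    bilinB_smul_left, bilinB_smul_left, bilinB_smul_left]
  ring

lemma apply_wedge_single (hΦ : IsPhi m Φ) (i j : Fin m) :
    Φ (wedge m (Pi.single i 1) (Pi.single j 1)) = soUnit i j := by
  ext a b
  have h := congrFun (hΦ (Pi.single i 1) (Pi.single j 1) (Pi.single b 1)) a
  simp only [mulVec_single, bilinB_single_left, MulOpposite.op_one, one_smul, col_apply] at h
  rw [h]
  by_cases hb : j.rev = b <;> by_cases hb' : i.rev = b <;>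
    simp [soUnit, hb, hb', Pi.single_apply, single_apply, eq_comm]

lemma lie_lie_wedge_single (hΦ : IsPhi m Φ) {i j : Fin m} (hi : i.rev ≠ i) (hj : j.rev ≠ j)
    (hij : i.rev ≠ j) {Y : Matrix (Fin m) (Fin m) ℂ} (hY : Y ∈ soB m) :
    ⁅Φ (wedge m (Pi.single i 1) (Pi.single j 1)), ⁅Φ (wedge m (Pi.single i 1) (Pi.single j 1)), Y⁆⁆
      = (-2 * Y j.rev i) • Φ (wedge m (Pi.single i 1) (Pi.single j 1)) := by
  rw [hΦ.apply_wedge_single, lie_lie_eq_of_mul_self_eq_zero (soUnit_mul_self hi hj hij),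
    soUnit_mul_mul_soUnit hY]
  module

lemma exists_mem_soB_lie_lie_wedge_single (hΦ : IsPhi m Φ) {i j : Fin m} (hi : i.rev ≠ i)
    (hj : j.rev ≠ j) (hij : i.rev ≠ j) (hne : i ≠ j) (c : ℂ) :
    ∃ Y ∈ soB m, ⁅Φ (wedge m (Pi.single i 1) (Pi.single j 1)),
      ⁅Φ (wedge m (Pi.single i 1) (Pi.single j 1)), Y⁆⁆
        = c • Φ (wedge m (Pi.single i 1) (Pi.single j 1)) := by
  have hY := smul_mem_soB (-c / 2) (hΦ.apply_wedge_mem_soB (Pi.single j.rev 1) (Pi.single i.rev 1))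
  refine ⟨_, hY, ?_⟩
  rw [hΦ.lie_lie_wedge_single hi hj hij hY, Matrix.smul_apply, hΦ.apply_wedge_single j.rev i.rev]
  simp [soUnit, hne]
  module

end IsPhi

/-- X₀ = Φ(e₁∧e₂) is a highest root vector of 𝔰𝔬(B):
every [X₀,[X₀,Y]] is a multiple of X₀, some Y realizes X₀ itself, and
{[X₀,[X₀,Y]] : Y ∈ 𝔰𝔬(B)} = ℂ·X₀. -/
theorem stmt5 (n : ℕ) (hn : 4 ≤ n) :
    (∃ Φ : ⋀[ℂ]^2 (Fin (2*n) → ℂ) →ₗ[ℂ] Matrix (Fin (2*n)) (Fin (2*n)) ℂ,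
      IsPhi (2*n) Φ) ∧
    ∀ Φ : ⋀[ℂ]^2 (Fin (2*n) → ℂ) →ₗ[ℂ] Matrix (Fin (2*n)) (Fin (2*n)) ℂ,
      IsPhi (2*n) Φ →
        letI X₀ : Matrix (Fin (2*n)) (Fin (2*n)) ℂ :=
          Φ (wedge (2*n) (Pi.single (⟨0, by omega⟩ : Fin (2*n)) 1)
            (Pi.single (⟨1, by omega⟩ : Fin (2*n)) 1))
        (∀ Y ∈ soB (2*n), ∃ c : ℂ, ⁅X₀, ⁅X₀, Y⁆⁆ = c • X₀) ∧
        (∃ Y ∈ soB (2*n), ⁅X₀, ⁅X₀, Y⁆⁆ = X₀) ∧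
        ({Z : Matrix (Fin (2*n)) (Fin (2*n)) ℂ | ∃ Y ∈ soB (2*n), Z = ⁅X₀, ⁅X₀, Y⁆⁆} =
          {Z : Matrix (Fin (2*n)) (Fin (2*n)) ℂ | ∃ c : ℂ, Z = c • X₀}) := by
  refine ⟨⟨phi (2*n), isPhi_phi (2*n)⟩, fun Φ hΦ => ?_⟩
  set i : Fin (2*n) := ⟨0, by omega⟩
  set j : Fin (2*n) := ⟨1, by omega⟩
  have hi : i.rev ≠ i := by simp [i, Fin.ext_iff]; omega
  have hj : j.rev ≠ j := by simp [j, Fin.ext_iff]; omega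
  have hij : i.rev ≠ j := by simp [i, j, Fin.ext_iff]; omega
  have hne : i ≠ j := by simp [i, j, Fin.ext_iff]
  have lie_lie := fun Y (hY : Y ∈ soB (2*n)) => hΦ.lie_lie_wedge_single hi hj hij hY
  have exists_lie_lie := hΦ.exists_mem_soB_lie_lie_wedge_single hi hj hij hne
  refine ⟨fun Y hY => ⟨_, lie_lie Y hY⟩, by simpa using exists_lie_lie 1, ?_⟩
  ext Z
  constructor
  · rintro ⟨Y, hY, rfl⟩
    exact ⟨_, lie_lie Y hY⟩
  · rintro ⟨c, rfl⟩
    obtain ⟨Y, hY, h⟩ := exists_lie_lie c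
    exact ⟨Y, hY, h.symm⟩
end
end

section
/- The stabilizer in SL₄(ℂ) of the quadruple (e₁, e₄*, e₃*, e₂) ∈ ℂ⁴ × (ℂ⁴)* × (ℂ⁴)* × ℂ⁴, under the action g·(v,φ,ψ,w) = (gv, φ∘g⁻¹, ψ∘g⁻¹, gw), equals P^u, the group of block matrices fromBlocks 1 R 0 1 with R ∈ Mat₂(ℂ). (Consequently the map g ↦ (ge₁, e₄*∘g⁻¹, e₃*∘g⁻¹, ge₂) induces an injection of SL₄/P^u into ℂ⁴ ⊕ (ℂ⁴)* ⊕ (ℂ⁴)* ⊕ ℂ⁴.) -/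
noncomputable section
open Matrix

/-- P^u: the unipotent radical of P_{(2,2)} ⊆ SL₄(ℂ), consisting of block matrices
`fromBlocks 1 R 0 1`. -/
def Pu : Set (Matrix.SpecialLinearGroup (Fin 4) ℂ) :=
  {g | ∃ R : Matrix (Fin 2) (Fin 2) ℂ,
    g.1 = Matrix.reindex finSumFinEquiv finSumFinEquiv
      (Matrix.fromBlocks 1 R 0 1 : Matrix (Fin 2 ⊕ Fin 2) (Fin 2 ⊕ Fin 2) ℂ)}

lemma fse0 : (finSumFinEquiv (m := 2) (n := 2)).symm 0 = Sum.inl 0 := by decide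
lemma fse1 : (finSumFinEquiv (m := 2) (n := 2)).symm 1 = Sum.inl 1 := by decide
lemma fse2 : (finSumFinEquiv (m := 2) (n := 2)).symm 2 = Sum.inr 0 := by decide
lemma fse3 : (finSumFinEquiv (m := 2) (n := 2)).symm 3 = Sum.inr 1 := by decide

/-- the stabilizer in SL₄(ℂ) of (e₁, e₄*, e₃*, e₂) equals P^u. -/
theorem stmt11 :
    {g : Matrix.SpecialLinearGroup (Fin 4) ℂ |
        g.1.mulVec (Pi.single 0 1) = (Pi.single 0 1 : Fin 4 → ℂ) ∧
        (LinearMap.proj 3 : (Fin 4 → ℂ) →ₗ[ℂ] ℂ).comp (Matrix.mulVecLin (g⁻¹).1) =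
          (LinearMap.proj 3 : (Fin 4 → ℂ) →ₗ[ℂ] ℂ) ∧
        (LinearMap.proj 2 : (Fin 4 → ℂ) →ₗ[ℂ] ℂ).comp (Matrix.mulVecLin (g⁻¹).1) =
          (LinearMap.proj 2 : (Fin 4 → ℂ) →ₗ[ℂ] ℂ) ∧
        g.1.mulVec (Pi.single 1 1) = (Pi.single 1 1 : Fin 4 → ℂ)} = Pu := by
  ext g
  simp only [Set.mem_setOf_eq, Pu]
  have hBA : (g⁻¹).1 * g.1 = 1 := by
    rw [← Matrix.SpecialLinearGroup.coe_mul, inv_mul_cancel,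
      Matrix.SpecialLinearGroup.coe_one]
  constructor
  · rintro ⟨h1, h2, h3, h4⟩
    -- columns
    have hc0 : ∀ i, g.1 i 0 = (Pi.single 0 1 : Fin 4 → ℂ) i := fun i => by
      have := congrFun h1 i; simpa using this
    have hc1 : ∀ i, g.1 i 1 = (Pi.single 1 1 : Fin 4 → ℂ) i := fun i => by
      have := congrFun h4 i; simpa using this
    -- rows of the inverse
    have hr3 : ∀ j, (g⁻¹).1 3 j = (Pi.single 3 1 : Fin 4 → ℂ) j := fun j => by
      have := LinearMap.congr_fun h2 (Pi.single j 1)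
      simpa [Matrix.mulVecLin_apply, Pi.single_apply, eq_comm] using this
    have hr2 : ∀ j, (g⁻¹).1 2 j = (Pi.single 2 1 : Fin 4 → ℂ) j := fun j => by
      have := LinearMap.congr_fun h3 (Pi.single j 1)
      simpa [Matrix.mulVecLin_apply, Pi.single_apply, eq_comm] using this
    -- rows 2,3 of g
    have hg2 : ∀ j, g.1 2 j = (1 : Matrix (Fin 4) (Fin 4) ℂ) 2 j := fun j => by
      have := congrFun (congrFun hBA 2) j
      rw [Matrix.mul_apply, Fin.sum_univ_four, hr2 0, hr2 1, hr2 2, hr2 3] at this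
      simpa [Pi.single_apply] using this
    have hg3 : ∀ j, g.1 3 j = (1 : Matrix (Fin 4) (Fin 4) ℂ) 3 j := fun j => by
      have := congrFun (congrFun hBA 3) j
      rw [Matrix.mul_apply, Fin.sum_univ_four, hr3 0, hr3 1, hr3 2, hr3 3] at this
      simpa [Pi.single_apply] using this
    have a00 : g.1 0 0 = 1 := by simpa using hc0 0
    have a10 : g.1 1 0 = 0 := by simpa [Pi.single_apply] using hc0 1
    have a20 : g.1 2 0 = 0 := by simpa [Pi.single_apply] using hc0 2
    have a30 : g.1 3 0 = 0 := by simpa [Pi.single_apply] using hc0 3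
    have a01 : g.1 0 1 = 0 := by simpa [Pi.single_apply] using hc1 0
    have a11 : g.1 1 1 = 1 := by simpa using hc1 1
    have a21 : g.1 2 1 = 0 := by simpa [Pi.single_apply] using hc1 2
    have a31 : g.1 3 1 = 0 := by simpa [Pi.single_apply] using hc1 3
    have a22 : g.1 2 2 = 1 := by simpa [Matrix.one_apply] using hg2 2
    have a23 : g.1 2 3 = 0 := by simpa [Matrix.one_apply] using hg2 3
    have a32 : g.1 3 2 = 0 := by simpa [Matrix.one_apply] using hg3 2
    have a33 : g.1 3 3 = 1 := by simpa [Matrix.one_apply] using hg3 3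
    refine ⟨Matrix.of ![![g.1 0 2, g.1 0 3], ![g.1 1 2, g.1 1 3]], ?_⟩
    ext i j
    fin_cases i <;> fin_cases j <;>
      simp [Matrix.reindex_apply, Matrix.submatrix_apply, fse0, fse1, fse2, fse3,
        Matrix.one_apply, a00, a10, a20, a30, a01, a11, a21, a31, a22, a23, a32, a33]
  · rintro ⟨R, hg⟩
    have hinv : (g⁻¹).1 = Matrix.reindex finSumFinEquiv finSumFinEquiv
        (Matrix.fromBlocks 1 (-R) 0 1 : Matrix (Fin 2 ⊕ Fin 2) (Fin 2 ⊕ Fin 2) ℂ) := by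
      have hmul : g.1 * Matrix.reindex finSumFinEquiv finSumFinEquiv
          (Matrix.fromBlocks 1 (-R) 0 1 : Matrix (Fin 2 ⊕ Fin 2) (Fin 2 ⊕ Fin 2) ℂ) = 1 := by
        rw [hg]
        simp only [Matrix.reindex_apply]
        rw [Matrix.submatrix_mul_equiv, Matrix.fromBlocks_multiply]
        simp [Matrix.fromBlocks_one, Matrix.submatrix_one_equiv]
      calc (g⁻¹).1 = (g⁻¹).1 * (g.1 * _) := by rw [hmul, mul_one]
        _ = ((g⁻¹).1 * g.1) * _ := by rw [mul_assoc]
        _ = _ := by rw [hBA, one_mul]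
    have entA : ∀ i j, g.1 i j = (Matrix.fromBlocks 1 R 0 1 :
        Matrix (Fin 2 ⊕ Fin 2) (Fin 2 ⊕ Fin 2) ℂ) (finSumFinEquiv.symm i)
        (finSumFinEquiv.symm j) := fun i j => by rw [hg]; rfl
    have entB : ∀ i j, (g⁻¹).1 i j = (Matrix.fromBlocks 1 (-R) 0 1 :
        Matrix (Fin 2 ⊕ Fin 2) (Fin 2 ⊕ Fin 2) ℂ) (finSumFinEquiv.symm i)
        (finSumFinEquiv.symm j) := fun i j => by rw [hinv]; rfl
    refine ⟨?_, ?_, ?_, ?_⟩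
    · funext i
      simp only [Matrix.mulVec_single, mul_one]
      fin_cases i <;>
        simp [entA, fse0, fse1, fse2, fse3, Matrix.one_apply, Pi.single_apply]
    · apply LinearMap.ext; intro v
      simp only [LinearMap.comp_apply, Matrix.mulVecLin_apply, LinearMap.proj_apply,
        Matrix.mulVec, dotProduct, Fin.sum_univ_four]
      rw [entB 3 0, entB 3 1, entB 3 2, entB 3 3, fse0, fse1, fse2, fse3]
      simp [Matrix.one_apply]
    · apply LinearMap.ext; intro v
      simp only [LinearMap.comp_apply, Matrix.mulVecLin_apply, LinearMap.proj_apply,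
        Matrix.mulVec, dotProduct, Fin.sum_univ_four]
      rw [entB 2 0, entB 2 1, entB 2 2, entB 2 3, fse0, fse1, fse2, fse3]
      simp [Matrix.one_apply]
    · funext i
      simp only [Matrix.mulVec_single, mul_one]
      fin_cases i <;>
        simp [entA, fse0, fse1, fse2, fse3, Matrix.one_apply, Pi.single_apply]
end
end
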